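/- Let Σ₁,…,Σ_E be D×D symmetric positive definite matrices, σ_e² > 0, β*, η* ∈ ℝ^D, and δ₁,…,δ_E ∈ ℝ^D. Suppose β_e = β* + Σ_e⁻¹(η* + δ_e) and S_β is invertible. Let β̃ = S_β⁻¹[(Σ_e Σ_e⁻¹/σ_e²)(Σ_e Σ_e β_e/σ_e²) − (Σ_e 1/σ_e²)(Σ_e β_e/σ_e²)]. Then ‖S_β(β̃ − β*)‖ ≤ (Σ_e 1/σ_e²)(‖Σ_e Σ_e⁻¹/σ_e²‖ + Σ_e ‖Σ_e⁻¹‖/σ_e²) · sup_e ‖δ_e‖. -/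

import Mathlib

open Matrix Finset

/-! The model makes the weighted moments affine in `β*, η*, δ`: with weights `wₑ = 1/σₑ²`,
`A = Σ wₑ Σₑ⁻¹`, `B = Σ wₑ Σₑ` and `c = Σ wₑ`, one gets `Σ wₑ Σₑ βₑ = B β* + c η* + Σ wₑ δₑ` and
`Σ wₑ βₑ = c β* + A η* + Σ wₑ Σₑ⁻¹ δₑ`. In the combination defining `β̃` the confounder `η*`
cancels (`A (c η*) = c (A η*)`) and `β*` appears through `S_β = A B − c² I`, so
`S_β (β̃ − β*) = A (Σ wₑ δₑ) − c Σ wₑ Σₑ⁻¹ δₑ`. The triangle inequality and the operator-norm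
bound then give the estimate. -/

/-- Euclidean norm of a vector in `ℝ^D`. -/
noncomputable def evnorm {D : ℕ} (v : Fin D → ℝ) : ℝ :=
  ‖(WithLp.equiv 2 (Fin D → ℝ)).symm v‖

/-- Euclidean (ℓ²) operator norm of a `D × D` real matrix. -/
noncomputable def eopnorm {D : ℕ} (M : Matrix (Fin D) (Fin D) ℝ) : ℝ :=
  ‖Matrix.toEuclideanCLM (𝕜 := ℝ) M‖

section Moments

variable {n ι R : Type*} [Fintype n] [DecidableEq n] [Fintype ι] [CommRing R]
  (S : ι → Matrix n n R) (w : ι → R) (β η : n → R) (δ : ι → n → R)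

theorem mulVec_nonsing_inv_mulVec {M : Matrix n n R} (hM : IsUnit M) (x : n → R) :
    M *ᵥ (M⁻¹ *ᵥ x) = x := by
  rw [mulVec_mulVec, mul_nonsing_inv _ ((isUnit_iff_isUnit_det M).mp hM), one_mulVec]

theorem sum_smul_mulVec_of_model (hS : ∀ i, IsUnit (S i)) :
    ∑ i, w i • S i *ᵥ (β + (S i)⁻¹ *ᵥ (η + δ i)) =
      (∑ i, w i • S i) *ᵥ β + (∑ i, w i) • η + ∑ i, w i • δ i := by
  simp only [mulVec_add, mulVec_nonsing_inv_mulVec (hS _), smul_add, sum_add_distrib,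
    sum_mulVec, smul_mulVec, sum_smul, add_assoc]

theorem sum_smul_of_model :
    ∑ i, w i • (β + (S i)⁻¹ *ᵥ (η + δ i)) =
      (∑ i, w i) • β + (∑ i, w i • (S i)⁻¹) *ᵥ η + ∑ i, w i • (S i)⁻¹ *ᵥ δ i := by
  simp only [mulVec_add, smul_add, sum_add_distrib, sum_mulVec, smul_mulVec, sum_smul, add_assoc]

theorem moment_combination_of_model (hS : ∀ i, IsUnit (S i)) :
    (∑ i, w i • (S i)⁻¹) *ᵥ (∑ i, w i • S i *ᵥ (β + (S i)⁻¹ *ᵥ (η + δ i)))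
        - (∑ i, w i) • ∑ i, w i • (β + (S i)⁻¹ *ᵥ (η + δ i)) =
      ((∑ i, w i • (S i)⁻¹) * (∑ i, w i • S i) - (∑ i, w i) ^ 2 • 1) *ᵥ β
        + ((∑ i, w i • (S i)⁻¹) *ᵥ ∑ i, w i • δ i - (∑ i, w i) • ∑ i, w i • (S i)⁻¹ *ᵥ δ i) := by
  rw [sum_smul_mulVec_of_model S w β η δ hS, sum_smul_of_model]
  simp only [mulVec_add, mulVec_smul, sub_mulVec, smul_mulVec, one_mulVec, ← mulVec_mulVec,
    smul_add, smul_smul]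
  module

end Moments

section Norms

variable {D : ℕ}

theorem evnorm_eq (v : Fin D → ℝ) : evnorm v = ‖WithLp.toLp 2 v‖ := rfl

theorem evnorm_sub_le (x y : Fin D → ℝ) : evnorm (x - y) ≤ evnorm x + evnorm y :=
  norm_sub_le (WithLp.toLp 2 x) (WithLp.toLp 2 y)

theorem evnorm_smul (c : ℝ) (v : Fin D → ℝ) : evnorm (c • v) = |c| * evnorm v :=
  norm_smul c (WithLp.toLp 2 v)

theorem evnorm_mulVec_le (M : Matrix (Fin D) (Fin D) ℝ) (x : Fin D → ℝ) :
    evnorm (M *ᵥ x) ≤ eopnorm M * evnorm x := by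
  have h := (toEuclideanCLM (𝕜 := ℝ) M).le_opNorm (WithLp.toLp 2 x)
  rwa [toEuclideanCLM_toLp] at h

theorem evnorm_sum_smul_le {ι : Type*} (s : Finset ι) {w : ι → ℝ} (hw : ∀ i, 0 ≤ w i)
    (x : ι → Fin D → ℝ) : evnorm (∑ i ∈ s, w i • x i) ≤ ∑ i ∈ s, w i * evnorm (x i) := by
  rw [evnorm_eq, WithLp.toLp_sum]
  refine (norm_sum_le _ _).trans (sum_le_sum fun i _ => ?_)
  rw [WithLp.toLp_smul, norm_smul, Real.norm_of_nonneg (hw i), evnorm_eq]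

end Norms

theorem evnorm_misspecification_le {D : ℕ} {ι : Type*} [Fintype ι] {w : ι → ℝ}
    (hw : ∀ i, 0 ≤ w i) (A : Matrix (Fin D) (Fin D) ℝ) (T : ι → Matrix (Fin D) (Fin D) ℝ)
    (δ : ι → Fin D → ℝ) {M : ℝ} (hδ : ∀ i, evnorm (δ i) ≤ M) :
    evnorm (A *ᵥ (∑ i, w i • δ i) - (∑ i, w i) • ∑ i, w i • T i *ᵥ δ i) ≤
      (∑ i, w i) * (eopnorm A + ∑ i, w i * eopnorm (T i)) * M := by
  have hc : 0 ≤ ∑ i, w i := sum_nonneg fun i _ => hw i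
  have hv : evnorm (∑ i, w i • δ i) ≤ (∑ i, w i) * M := by
    rw [sum_mul]
    exact (evnorm_sum_smul_le _ hw δ).trans
      (sum_le_sum fun i _ => mul_le_mul_of_nonneg_left (hδ i) (hw i))
  have hTv : evnorm (∑ i, w i • T i *ᵥ δ i) ≤ (∑ i, w i * eopnorm (T i)) * M := by
    rw [sum_mul]
    refine (evnorm_sum_smul_le _ hw _).trans (sum_le_sum fun i _ => ?_)
    rw [mul_assoc]
    exact mul_le_mul_of_nonneg_left ((evnorm_mulVec_le _ _).trans
      (mul_le_mul_of_nonneg_left (hδ i) (norm_nonneg _))) (hw i)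
  calc _ ≤ evnorm (A *ᵥ ∑ i, w i • δ i) + |∑ i, w i| * evnorm (∑ i, w i • T i *ᵥ δ i) := by
        rw [← evnorm_smul]; exact evnorm_sub_le _ _
    _ ≤ eopnorm A * ((∑ i, w i) * M) + (∑ i, w i) * ((∑ i, w i * eopnorm (T i)) * M) := by
        rw [abs_of_nonneg hc]
        gcongr
        exact (evnorm_mulVec_le _ _).trans (mul_le_mul_of_nonneg_left hv (norm_nonneg _))
    _ = _ := by ring

theorem kl_regression_robustness_general {D E : ℕ}
    (S : Fin E → Matrix (Fin D) (Fin D) ℝ) (s2 : Fin E → ℝ) (b : Fin E → Fin D → ℝ)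
    (hS : ∀ e, (S e).PosDef) (hs2 : ∀ e, 0 < s2 e)
    (bstar etastar : Fin D → ℝ) (δ : Fin E → Fin D → ℝ)
    (hmodel : ∀ e, b e = bstar + (S e)⁻¹.mulVec (etastar + δ e))
    (Sbeta : Matrix (Fin D) (Fin D) ℝ)
    (hSbeta : Sbeta = (∑ e, (s2 e)⁻¹ • (S e)⁻¹) * (∑ e, (s2 e)⁻¹ • S e)
      - ((∑ e, (s2 e)⁻¹) ^ 2) • (1 : Matrix (Fin D) (Fin D) ℝ))
    (hinv : IsUnit Sbeta)
    (btilde : Fin D → ℝ)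
    (hbt : btilde = Sbeta⁻¹.mulVec
        ((∑ e, (s2 e)⁻¹ • (S e)⁻¹).mulVec (∑ e, (s2 e)⁻¹ • (S e).mulVec (b e))
          - (∑ e, (s2 e)⁻¹) • (∑ e, (s2 e)⁻¹ • b e))) :
    evnorm (Sbeta.mulVec (btilde - bstar)) ≤
      (∑ e, (s2 e)⁻¹) *
        (eopnorm (∑ e, (s2 e)⁻¹ • (S e)⁻¹) + ∑ e, (s2 e)⁻¹ * eopnorm (S e)⁻¹) *
        (⨆ e, evnorm (δ e)) := by
  have herror : Sbeta *ᵥ (btilde - bstar) =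
      (∑ e, (s2 e)⁻¹ • (S e)⁻¹) *ᵥ (∑ e, (s2 e)⁻¹ • δ e)
        - (∑ e, (s2 e)⁻¹) • ∑ e, (s2 e)⁻¹ • (S e)⁻¹ *ᵥ δ e := by
    simp only [hbt, funext hmodel, moment_combination_of_model S _ _ _ _ fun e => (hS e).isUnit,
      ← hSbeta, mulVec_sub, mulVec_nonsing_inv_mulVec hinv]
    abel
  rw [herror]
  exact evnorm_misspecification_le (fun e => (inv_pos.mpr (hs2 e)).le) _ _ δ
    (le_ciSup (Finite.bddAbove_range fun e => evnorm (δ e)))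

/-- Robustness of KL regression to model misspecification: with
`β_e = β* + Σ_e⁻¹(η* + δ_e)`, the estimation error satisfies
`‖S_β(β̃ − β*)‖ ≤ (Σ_e 1/σ_e²)(‖Σ_e Σ_e⁻¹/σ_e²‖ + Σ_e ‖Σ_e⁻¹‖/σ_e²) · sup_e ‖δ_e‖`. -/
theorem kl_regression_robustness {D E : ℕ} (hE : 1 ≤ E)
    (S : Fin E → Matrix (Fin D) (Fin D) ℝ) (s2 : Fin E → ℝ) (b : Fin E → Fin D → ℝ)
    (hS : ∀ e, (S e).PosDef) (hs2 : ∀ e, 0 < s2 e)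
    (bstar etastar : Fin D → ℝ) (δ : Fin E → Fin D → ℝ)
    (hmodel : ∀ e, b e = bstar + (S e)⁻¹.mulVec (etastar + δ e))
    (Sbeta : Matrix (Fin D) (Fin D) ℝ)
    (hSbeta : Sbeta = (∑ e, (s2 e)⁻¹ • (S e)⁻¹) * (∑ e, (s2 e)⁻¹ • S e)
      - ((∑ e, (s2 e)⁻¹) ^ 2) • (1 : Matrix (Fin D) (Fin D) ℝ))
    (hinv : IsUnit Sbeta)
    (btilde : Fin D → ℝ)
    (hbt : btilde = Sbeta⁻¹.mulVec
        ((∑ e, (s2 e)⁻¹ • (S e)⁻¹).mulVec (∑ e, (s2 e)⁻¹ • (S e).mulVec (b e))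
          - (∑ e, (s2 e)⁻¹) • (∑ e, (s2 e)⁻¹ • b e))) :
    evnorm (Sbeta.mulVec (btilde - bstar)) ≤
      (∑ e, (s2 e)⁻¹) *
        (eopnorm (∑ e, (s2 e)⁻¹ • (S e)⁻¹) + ∑ e, (s2 e)⁻¹ * eopnorm (S e)⁻¹) *
        (⨆ e, evnorm (δ e)) :=
  kl_regression_robustness_general S s2 b hS hs2 bstar etastar δ hmodel Sbeta hSbeta hinv btilde hbt
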